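/- For every odd prime p, the graph G(Z*_{p^2}) satisfies (p^2−1)/(p^2−p+1) ≤ ldim_f(G(Z*_{p^2})) ≤ (p^2−1)/2. -/

import Mathlib

open Finset

def IsLocalResolvingFunction {V : Type*} [Fintype V] (G : SimpleGraph V) (ζ : V → ℝ) : Prop :=
  (∀ w, ζ w ∈ Set.Icc (0 : ℝ) 1) ∧
    ∀ u v, G.Adj u v →
      1 ≤ ∑ w ∈ Finset.univ.filter (fun w => G.dist w u ≠ G.dist w v), ζ w

noncomputable def ldimf {V : Type*} [Fintype V] (G : SimpleGraph V) : ℝ :=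
  sInf {s : ℝ | ∃ ζ : V → ℝ, IsLocalResolvingFunction G ζ ∧ s = ∑ v, ζ v}

def zStarGraph (n : ℕ) : SimpleGraph {x : Fin n // x.val ≠ 0} where
  Adj x y := x ≠ y ∧ 1 < Nat.gcd (x.1.val * y.1.val) n
  symm := ⟨fun x y ⟨h1, h2⟩ => ⟨h1.symm, by rwa [Nat.mul_comm]⟩⟩
  loopless := ⟨fun x ⟨h, _⟩ => h rfl⟩

/-!
Every multiple of `p` is a universal vertex of `G(Z*_{p²})`. Two distinct universal vertices
`a, b` are resolved only by themselves, and a universal vertex `a` and the vertex `1` only by `a`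
and the non-multiples of `p`, whose total weight we call `X`. Hence `ζ a + ζ b ≥ 1`,
`ζ a + X ≥ 1` and `ζ b + X ≥ 1`, so every local resolving function has weight at least `3/2`,
which exceeds `(p²-1)/(p²-p+1)` as `p² - 3p + 5 > 0`. The upper bound comes from the constant
function `1/2`, which is a local resolving function of any graph since the ends of an edge
resolve it.
-/

open SimpleGraph

namespace IsLocalResolvingFunction

variable {V : Type*} [Fintype V] {G : SimpleGraph V} {ζ : V → ℝ}

lemma nonneg (hζ : IsLocalResolvingFunction G ζ) (w : V) : 0 ≤ ζ w := (hζ.1 w).1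

lemma one_le_sum_of_forall_notMem_commonNeighbors (hζ : IsLocalResolvingFunction G ζ) {u v : V}
    (huv : G.Adj u v) {T : Finset V} (hT : ∀ w ∉ T, w ∈ G.commonNeighbors u v) :
    1 ≤ ∑ w ∈ T, ζ w := by
  have hsub : univ.filter (fun w => G.dist w u ≠ G.dist w v) ⊆ T := by
    intro w hw
    by_contra hwT
    obtain ⟨huw, hvw⟩ := G.mem_commonNeighbors.mp (hT w hwT)
    simp only [mem_filter, mem_univ, true_and, dist_comm (u := w),
      dist_eq_one_iff_adj.mpr huw, dist_eq_one_iff_adj.mpr hvw, ne_eq, not_true_eq_false] at hw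
  exact (hζ.2 u v huv).trans (sum_le_sum_of_subset_of_nonneg hsub fun w _ _ => hζ.nonneg w)

lemma three_halves_le_sum_of_isUniversal [DecidableEq V] {D : Finset V}
    (hζ : IsLocalResolvingFunction G ζ) (hD : ∀ x ∈ D, G.IsUniversal x) {a b c : V}
    (ha : a ∈ D) (hb : b ∈ D) (hab : a ≠ b) (hc : c ∉ D) : 3 / 2 ≤ ∑ v, ζ v := by
  have hζab : 1 ≤ ζ a + ζ b := by
    rw [← sum_pair hab]
    refine hζ.one_le_sum_of_forall_notMem_commonNeighbors (hD a ha hab) fun w hw => ?_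
    simp only [mem_insert, mem_singleton, not_or] at hw
    exact ⟨hD a ha (Ne.symm hw.1), hD b hb (Ne.symm hw.2)⟩
  have hζD : ∀ x ∈ D, 1 ≤ ζ x + ∑ w ∈ Dᶜ, ζ w := by
    intro x hx
    rw [← sum_insert (by simpa using hx)]
    refine hζ.one_le_sum_of_forall_notMem_commonNeighbors (hD x hx (ne_of_mem_of_not_mem hx hc))
      fun w hw => ?_
    simp only [mem_insert, mem_compl, not_or, not_not] at hw
    exact ⟨(hD w hw.2 hw.1).symm, (hD w hw.2 (ne_of_mem_of_not_mem hw.2 hc)).symm⟩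
  have hsum : ζ a + (ζ b + ∑ w ∈ Dᶜ, ζ w) ≤ ∑ v, ζ v := by
    rw [← sum_insert (by simpa using hb), ← sum_insert (by simp [hab, ha])]
    exact sum_le_sum_of_subset_of_nonneg (subset_univ _) fun w _ _ => hζ.nonneg w
  linarith [hζD a ha, hζD b hb]

end IsLocalResolvingFunction

section ldimf

variable {V : Type*} [Fintype V] (G : SimpleGraph V)

lemma isLocalResolvingFunction_const_half : IsLocalResolvingFunction G fun _ => 1 / 2 := by
  classical
  refine ⟨fun _ => ⟨by norm_num, by norm_num⟩, fun u v huv => ?_⟩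
  have hsub : ({u, v} : Finset V) ⊆ univ.filter (fun w => G.dist w u ≠ G.dist w v) := by
    intro w hw
    rcases mem_insert.mp hw with rfl | hw
    · simp [dist_eq_one_iff_adj.mpr huv]
    · rw [mem_singleton.mp hw]
      simp [dist_eq_one_iff_adj.mpr huv.symm]
  calc (1 : ℝ) = ∑ w ∈ {u, v}, 1 / 2 := by rw [sum_pair huv.ne]; norm_num
    _ ≤ _ := sum_le_sum_of_subset_of_nonneg hsub fun _ _ _ => by norm_num

variable {G}

lemma ldimf_le {ζ : V → ℝ} (hζ : IsLocalResolvingFunction G ζ) : ldimf G ≤ ∑ v, ζ v :=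
  csInf_le ⟨0, by rintro _ ⟨ζ', hζ', rfl⟩; exact sum_nonneg fun w _ => hζ'.nonneg w⟩ ⟨ζ, hζ, rfl⟩

lemma le_ldimf {c : ℝ} (h : ∀ ζ, IsLocalResolvingFunction G ζ → c ≤ ∑ v, ζ v) :
    c ≤ ldimf G :=
  le_csInf ⟨_, _, isLocalResolvingFunction_const_half G, rfl⟩ <| by
    rintro _ ⟨ζ, hζ, rfl⟩
    exact h ζ hζ

variable (G)

lemma ldimf_le_card_div_two : ldimf G ≤ Fintype.card V / 2 :=
  (ldimf_le (isLocalResolvingFunction_const_half G)).trans_eq (by simp [div_eq_mul_inv])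

end ldimf

lemma card_subtype_fin_val_ne_zero (n : ℕ) : Fintype.card {x : Fin n // x.val ≠ 0} = n - 1 := by
  cases n with
  | zero => simp
  | succ n => simp [Fintype.card_subtype_compl, Fin.val_eq_zero_iff]

lemma zStarGraph_isUniversal_of_dvd {n d : ℕ} (hd : 1 < d) (hdn : d ∣ n)
    {x : {x : Fin n // x.val ≠ 0}} (hx : d ∣ x.1.val) : (zStarGraph n).IsUniversal x := by
  intro y hxy
  refine ⟨hxy, hd.trans_le (Nat.le_of_dvd (Nat.gcd_pos_of_pos_right _ x.1.pos) ?_)⟩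
  exact Nat.dvd_gcd (hx.mul_right _) hdn

lemma three_halves_le_ldimf_zStarGraph {n d : ℕ} (hd : 1 < d) (hdn : d ∣ n) (h2d : 2 * d < n) :
    3 / 2 ≤ ldimf (zStarGraph n) := by
  let vert (m : ℕ) (hm0 : m ≠ 0) (hmn : m < n) : {x : Fin n // x.val ≠ 0} := ⟨⟨m, hmn⟩, hm0⟩
  refine le_ldimf fun ζ hζ => hζ.three_halves_le_sum_of_isUniversal
    (D := univ.filter fun x => d ∣ x.1.val) (fun x hx => ?_)
    (a := vert d (by omega) (by omega)) (b := vert (2 * d) (by omega) h2d)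
    (c := vert 1 one_ne_zero (by omega)) ?_ ?_ ?_ ?_
  · exact zStarGraph_isUniversal_of_dvd hd hdn (mem_filter.mp hx).2
  · simp [vert]
  · simp [vert]
  · simp [vert, Subtype.ext_iff, Fin.ext_iff]; omega
  · simp [vert]; omega

/-- For every odd prime `p`,
`(p^2-1)/(p^2-p+1) ≤ ldimf(G(Z*_{p^2})) ≤ (p^2-1)/2`. -/
theorem ldimf_zStarGraph_p_sq (p : ℕ) (hp : p.Prime) (hodd : Odd p) :
    ((p : ℝ) ^ 2 - 1) / ((p : ℝ) ^ 2 - (p : ℝ) + 1) ≤ ldimf (zStarGraph (p ^ 2)) ∧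
      ldimf (zStarGraph (p ^ 2)) ≤ ((p : ℝ) ^ 2 - 1) / 2 := by
  have hp3 : 3 ≤ p := hp.two_le.lt_of_ne fun h => by subst h; exact absurd hodd (by decide)
  have hp3' : (3 : ℝ) ≤ p := by exact_mod_cast hp3
  constructor
  · calc ((p : ℝ) ^ 2 - 1) / ((p : ℝ) ^ 2 - p + 1) ≤ 3 / 2 := by
          rw [div_le_div_iff₀ (by nlinarith) two_pos]; nlinarith
      _ ≤ ldimf (zStarGraph (p ^ 2)) :=
          three_halves_le_ldimf_zStarGraph hp.one_lt (dvd_pow_self p two_ne_zero) (by nlinarith)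
  · have hcard := ldimf_le_card_div_two (zStarGraph (p ^ 2))
    rwa [card_subtype_fin_val_ne_zero, Nat.cast_sub (Nat.one_le_pow _ _ hp.pos), Nat.cast_pow,
      Nat.cast_one] at hcard
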